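/- Let O be uniformly distributed over {0,1}^n, let E be a vector of n independent Bernoulli(p) bits, independent of O, and let Y = O ⊕ E. If 0 ≤ μ < p ≤ 1/2 then E_y [ max_{o ∈ {0,1}^n} Pr( d_H(O, o) ≤ μ·n | Y = y ) ] ≤ exp( −(p − μ)²·n / (2p) ); that is, O is (μ, δ)-closely-secure conditioned on Y with δ = (p − μ)² / (2·ln(2)·p). -/
import Mathlib


open Finset
open scoped Classical BigOperators


lemma my_exp_neg_le {x : ℝ} (hx : 0 ≤ x) : Real.exp (-x) ≤ 1 - x + x ^ 2 / 2 := by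
  have h := Real.quadratic_le_exp_of_nonneg hx
  have hQ : 0 < 1 + x + x ^ 2 / 2 := by positivity
  have h1 : Real.exp (-x) ≤ 1 / (1 + x + x ^ 2 / 2) := by
    rw [Real.exp_neg, inv_eq_one_div]
    exact one_div_le_one_div_of_le hQ h
  have h2 : 1 / (1 + x + x ^ 2 / 2) ≤ 1 - x + x ^ 2 / 2 := by
    rw [div_le_iff₀ hQ]
    nlinarith [sq_nonneg (x ^ 2)]
  linarith

lemma my_chernoff (n : ℕ) (p μ : ℝ) (hμ0 : 0 ≤ μ) (hμp : μ < p) (hp : p ≤ 1 / 2)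
    (z : Fin n → Bool) :
    ∑ e : Fin n → Bool,
        (if (hammingDist e z : ℝ) ≤ μ * n then ∏ i, (if e i then p else 1 - p) else 0)
      ≤ Real.exp (-(p - μ) ^ 2 * n / (2 * p)) := by
  have hp0 : 0 < p := lt_of_le_of_lt hμ0 hμp
  set l : ℝ := (p - μ) / p with hl
  have hl0 : 0 ≤ l := div_nonneg (by linarith) hp0.le
  have hexp1 : Real.exp (-l) ≤ 1 := by
    calc Real.exp (-l) ≤ Real.exp 0 := Real.exp_le_exp.mpr (by linarith)
    _ = 1 := Real.exp_zero
  set h : Fin n → Bool → ℝ :=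
    fun i b => (if b then p else 1 - p) * Real.exp (-(l * (if b ≠ z i then 1 else 0))) with hh
  have hnn : ∀ (i : Fin n) (b : Bool), 0 ≤ h i b := by
    intro i b
    apply mul_nonneg _ (Real.exp_pos _).le
    split <;> linarith
  have hd : ∀ e : Fin n → Bool,
      (hammingDist e z : ℝ) = ∑ i, (if e i ≠ z i then (1 : ℝ) else 0) := by
    intro e
    rw [hammingDist, Finset.card_filter]
    push_cast
    rfl
  have hbd : ∀ i : Fin n, (∑ b : Bool, h i b) ≤ Real.exp (p * (Real.exp (-l) - 1)) := by
    intro i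
    have key : 1 - p + p * Real.exp (-l) ≤ Real.exp (p * (Real.exp (-l) - 1)) := by
      have hk := Real.add_one_le_exp (p * (Real.exp (-l) - 1))
      nlinarith
    rw [Fintype.sum_bool]
    cases hzi : z i
    · simp only [hh, hzi]
      norm_num
      linarith
    · simp only [hh, hzi]
      norm_num
      nlinarith [mul_nonneg (by linarith : (0:ℝ) ≤ 1 - 2 * p)
        (by linarith : (0:ℝ) ≤ 1 - Real.exp (-l))]
  have step1 : ∀ e : Fin n → Bool,
      (if (hammingDist e z : ℝ) ≤ μ * n then ∏ i, (if e i then p else 1 - p) else 0)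
        ≤ Real.exp (l * (μ * n)) * ∏ i, h i (e i) := by
    intro e
    have hDnn : 0 ≤ ∏ i, (if e i then p else 1 - p) :=
      Finset.prod_nonneg (fun i _ => by split <;> linarith)
    have hre : Real.exp (l * (μ * n)) * ∏ i, h i (e i)
        = Real.exp (l * (μ * n - (hammingDist e z : ℝ))) * ∏ i, (if e i then p else 1 - p) := by
      rw [hd e]
      have e1 : l * (μ * ↑n - ∑ i, (if e i ≠ z i then (1:ℝ) else 0))
          = l * (μ * ↑n) + ∑ i, (-(l * (if e i ≠ z i then (1:ℝ) else 0))) := by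
        rw [Finset.sum_neg_distrib, ← Finset.mul_sum]
        ring
      rw [e1, Real.exp_add, Real.exp_sum, mul_assoc, ← Finset.prod_mul_distrib]
      congr 1
      exact Finset.prod_congr rfl fun i _ => by rw [hh]; ring
    rw [hre]
    split_ifs with hc
    · refine le_mul_of_one_le_left hDnn (Real.one_le_exp ?_)
      exact mul_nonneg hl0 (by linarith)
    · exact mul_nonneg (Real.exp_pos _).le hDnn
  calc ∑ e : Fin n → Bool,
        (if (hammingDist e z : ℝ) ≤ μ * n then ∏ i, (if e i then p else 1 - p) else 0)
      ≤ ∑ e : Fin n → Bool, Real.exp (l * (μ * n)) * ∏ i, h i (e i) :=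
        Finset.sum_le_sum fun e _ => step1 e
    _ = Real.exp (l * (μ * n)) * ∑ e : Fin n → Bool, ∏ i, h i (e i) := by
        rw [Finset.mul_sum]
    _ = Real.exp (l * (μ * n)) * ∏ i : Fin n, ∑ b : Bool, h i b := by
        rw [← Fintype.prod_sum]
    _ ≤ Real.exp (l * (μ * n)) * ∏ i : Fin n, Real.exp (p * (Real.exp (-l) - 1)) := by
        refine mul_le_mul_of_nonneg_left ?_ (Real.exp_pos _).le
        refine Finset.prod_le_prod (fun i _ => ?_) (fun i _ => hbd i)
        exact Finset.sum_nonneg fun b _ => hnn i b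
    _ = Real.exp (l * (μ * n) + n * (p * (Real.exp (-l) - 1))) := by
        rw [Finset.prod_const, card_univ, Fintype.card_fin, ← Real.exp_nat_mul, ← Real.exp_add]
    _ ≤ Real.exp (-(p - μ) ^ 2 * n / (2 * p)) := by
        apply Real.exp_le_exp.mpr
        have hq := my_exp_neg_le hl0
        have hid : l * μ + p * ((1 - l + l ^ 2 / 2) - 1) = -(p - μ) ^ 2 / (2 * p) := by
          rw [hl]; field_simp; ring
        have hstep : l * μ + p * (Real.exp (-l) - 1) ≤ -(p - μ) ^ 2 / (2 * p) := by
          nlinarith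
        have hn0 : (0:ℝ) ≤ n := Nat.cast_nonneg n
        calc l * (μ * n) + n * (p * (Real.exp (-l) - 1))
            = n * (l * μ + p * (Real.exp (-l) - 1)) := by ring
          _ ≤ n * (-(p - μ) ^ 2 / (2 * p)) := mul_le_mul_of_nonneg_left hstep hn0
          _ = -(p - μ) ^ 2 * n / (2 * p) := by ring


/-- Probability of an event over a finite sample space with mass function `P`. -/
noncomputable def pr {Ω : Type*} [Fintype Ω] (P : Ω → ℝ) (E : Ω → Prop) : ℝ :=
  ∑ ω, if E ω then P ω else 0

/-- Conditional probability `Pr(A | B)`. -/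
noncomputable def condPr {Ω : Type*} [Fintype Ω] (P : Ω → ℝ) (A B : Ω → Prop) : ℝ :=
  pr P (fun ω => A ω ∧ B ω) / pr P B

/-- `E_y [ max_{x ∈ {0,1}^n} Pr( d_H(X, x) ≤ t | Y = y ) ]`: the conditional
close-guessing probability with (real) radius `t`; `X` is `(β, δ)`-closely-secure
conditioned on `Y` iff `closeGuess P X Y (β * n) ≤ 2 ^ (-(δ * n))`. -/
noncomputable def closeGuess {Ω 𝒴 : Type*} [Fintype Ω] [Fintype 𝒴] (P : Ω → ℝ)
    {n : ℕ} (X : Ω → Fin n → Bool) (Y : Ω → 𝒴) (t : ℝ) : ℝ :=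
  ∑ y : 𝒴, pr P (fun ω => Y ω = y) *
    ⨆ x : Fin n → Bool,
      condPr P (fun ω => (hammingDist (X ω) x : ℝ) ≤ t) (fun ω => Y ω = y)

/-- Hamming weight of a binary string. -/
def wt {n : ℕ} (e : Fin n → Bool) : ℕ := hammingDist e (fun _ => false)


lemma xor_eq_iff' {n : ℕ} (o e y : Fin n → Bool) :
    (fun i => xor (o i) (e i)) = y ↔ o = fun i => xor (y i) (e i) := by
  have h : ∀ a b c : Bool, (xor a b = c) ↔ (a = xor c b) := by decide
  constructor
  · intro hh; funext i; exact (h _ _ _).1 (congrFun hh i)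
  · intro hh; funext i; exact (h _ _ _).2 (congrFun hh i)

lemma hamm_xor {n : ℕ} (y e x : Fin n → Bool) :
    hammingDist (fun i => xor (y i) (e i)) x = hammingDist e (fun i => xor (y i) (x i)) := by
  have h : ∀ a b c : Bool, (xor a b ≠ c) ↔ (b ≠ xor a c) := by decide
  unfold hammingDist
  apply congrArg
  ext i
  simp only [Finset.mem_filter, Finset.mem_univ, true_and]
  exact h _ _ _

lemma wt_prod {n : ℕ} (p : ℝ) (e : Fin n → Bool) :
    p ^ wt e * (1 - p) ^ (n - wt e) = ∏ i, (if e i then p else 1 - p) := by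
  rw [Finset.prod_ite, Finset.prod_const, Finset.prod_const]
  have h1 : #(Finset.filter (fun i => e i = true) Finset.univ) = wt e := by
    unfold wt hammingDist
    apply congrArg
    ext i
    simp only [Finset.mem_filter, Finset.mem_univ, true_and]
    cases e i <;> simp
  have h2 := Finset.card_filter_add_card_filter_not
      (s := (Finset.univ : Finset (Fin n))) (fun i => e i = true)
  simp only [Finset.card_univ, Fintype.card_fin] at h2
  rw [h1] at h2
  rw [h1]
  have h3 : #(Finset.filter (fun i => ¬ e i = true) Finset.univ) = n - wt e := by omega
  rw [h3]

lemma sumD {n : ℕ} (p : ℝ) :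
    ∑ e : Fin n → Bool, ∏ i, (if e i then p else 1 - p) = 1 := by
  rw [← Fintype.prod_sum (fun (i : Fin n) (b : Bool) => if b then p else 1 - p)]
  have h : ∀ i : Fin n, ∑ b : Bool, (if b then p else 1 - p) = 1 := by
    intro i; rw [Fintype.sum_bool]; norm_num
  rw [Finset.prod_congr rfl fun i _ => h i, Finset.prod_const_one]

lemma prB {n : ℕ} (p : ℝ) (y : Fin n → Bool) :
    pr (fun ω : (Fin n → Bool) × (Fin n → Bool) =>
        (1 / 2 ^ n : ℝ) * (p ^ wt ω.2 * (1 - p) ^ (n - wt ω.2)))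
      (fun ω => (fun i => xor (ω.1 i) (ω.2 i)) = y) = 1 / 2 ^ n := by
  unfold pr
  rw [Fintype.sum_prod_type_right]
  simp only []
  simp_rw [xor_eq_iff', Finset.sum_ite_eq' Finset.univ, Finset.mem_univ, if_true]
  simp_rw [wt_prod]
  rw [← Finset.mul_sum, sumD, mul_one]

lemma my_ite_and {α : Type*} (P Q : Prop) [Decidable P] [Decidable Q] [Decidable (P ∧ Q)]
    (a b : α) : (if P ∧ Q then a else b) = if Q then (if P then a else b) else b := by
  split_ifs <;> tauto

lemma prAB {n : ℕ} (p t : ℝ) (x y : Fin n → Bool) :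
    pr (fun ω : (Fin n → Bool) × (Fin n → Bool) =>
        (1 / 2 ^ n : ℝ) * (p ^ wt ω.2 * (1 - p) ^ (n - wt ω.2)))
      (fun ω => ((hammingDist ω.1 x : ℝ) ≤ t) ∧ (fun i => xor (ω.1 i) (ω.2 i)) = y)
    = (1 / 2 ^ n : ℝ) *
        ∑ e : Fin n → Bool,
          (if (hammingDist e (fun i => xor (y i) (x i)) : ℝ) ≤ t
            then ∏ i, (if e i then p else 1 - p) else 0) := by
  unfold pr
  rw [Fintype.sum_prod_type_right]
  simp only []
  simp_rw [xor_eq_iff']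
  simp_rw [my_ite_and]
  simp_rw [Finset.sum_ite_eq' Finset.univ]
  simp_rw [Finset.mem_univ, if_true]
  simp_rw [hamm_xor]
  simp_rw [wt_prod]
  rw [Finset.mul_sum]
  refine Finset.sum_congr rfl fun e _ => ?_
  split_ifs <;> ring

/-- A uniform source observed through a binary symmetric channel is closely-secure:
let `O` be uniform over `{0,1}^n`, `E` a vector of `n` independent Bernoulli(p)
bits independent of `O`, and `Y = O ⊕ E`.  If `0 ≤ μ < p ≤ 1/2` then
`E_y [ max_o Pr( d_H(O, o) ≤ μ·n | Y = y ) ] ≤ exp( −(p−μ)²·n/(2p) )`, i.e. `O` is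
`(μ, δ)`-closely-secure conditioned on `Y` with `δ = (p−μ)²/(2·ln 2·p)`. -/
theorem uniform_bsc_closely_secure (n : ℕ) (p μ : ℝ)
    (hμ0 : 0 ≤ μ) (hμp : μ < p) (hp : p ≤ 1 / 2) :
    closeGuess
      (fun ω : (Fin n → Bool) × (Fin n → Bool) =>
        (1 / 2 ^ n : ℝ) * (p ^ wt ω.2 * (1 - p) ^ (n - wt ω.2)))
      (fun ω => ω.1)
      (fun ω => fun i => xor (ω.1 i) (ω.2 i))
      (μ * n)
    ≤ Real.exp (-(p - μ) ^ 2 * n / (2 * p)) := by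
  have hp0 : 0 < p := lt_of_le_of_lt hμ0 hμp
  have h2n : (0:ℝ) < 1 / 2 ^ n := by positivity
  simp only [closeGuess]
  have key : ∀ y x : Fin n → Bool,
      condPr (fun ω : (Fin n → Bool) × (Fin n → Bool) =>
          (1 / 2 ^ n : ℝ) * (p ^ wt ω.2 * (1 - p) ^ (n - wt ω.2)))
        (fun ω => (hammingDist ω.1 x : ℝ) ≤ μ * n)
        (fun ω => (fun i => xor (ω.1 i) (ω.2 i)) = y)
      ≤ Real.exp (-(p - μ) ^ 2 * n / (2 * p)) := by
    intro y x
    simp only [condPr]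
    rw [prAB p (μ * (n:ℝ)) x y, prB p y]
    rw [mul_comm, mul_div_assoc, div_self (ne_of_gt h2n), mul_one]
    exact my_chernoff n p μ hμ0 hμp hp _
  refine le_trans (Finset.sum_le_sum
    (g := fun _ : Fin n → Bool => (1 / 2 ^ n : ℝ) * Real.exp (-(p - μ) ^ 2 * n / (2 * p)))
    (fun y _ => ?_)) ?_
  · rw [prB p y]
    exact mul_le_mul_of_nonneg_left (ciSup_le fun x => key y x) h2n.le
  · rw [Finset.sum_const, Finset.card_univ, nsmul_eq_mul]
    have hcard : ((Fintype.card (Fin n → Bool) : ℕ) : ℝ) = 2 ^ n := by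
      rw [Fintype.card_fun]
      push_cast
      simp
    rw [hcard, ← mul_assoc, mul_one_div, div_self (by positivity), one_mul]
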